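/- arXiv:1905.07966 — 2 statements merged into one kernel-verified Lean document; each statement's English description precedes it below -/
import Mathlib

section
/- Exactness of the box bound under disjoint supports (Proposition 9): if the supports X_{ρ^l ≠ 0} = {x ∈ X : ρ^l(x) ≠ 0} are pairwise disjoint for distinct components l, then M⁺ = ∏_{l=1}^{m} M⁺_l. -/
/-!
Since `ρ ≤ 0` and `μ ≥ 0`, dropping all terms but the `l`-th can only increase `μᵀρ(x)`, so
`M⁺` lies in the box. Conversely, disjointness of the supports leaves at most one nonzero term
of `μᵀρ(x)` at each `x`: if it is the `l`-th, membership in `M⁺_l` suffices, and if there is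
none, `π(x) - π⁺ ≤ 0` by maximality of `π⁺`.
-/

open Finset

theorem sum_mul_le_mul_of_nonneg_of_nonpos {ι R : Type*} [Fintype ι] [Semiring R] [PartialOrder R]
    [IsOrderedRing R] {μ r : ι → R} (hμ : ∀ k, 0 ≤ μ k) (hr : ∀ k, r k ≤ 0) (l : ι) :
    ∑ k, μ k * r k ≤ μ l * r l := by
  simpa using sum_le_sum_of_subset_of_nonpos' (subset_univ {l})
    fun k _ _ => mul_nonpos_of_nonneg_of_nonpos (hμ k) (hr k)

theorem sum_mul_eq_zero_or_exists_eq_single {ι R : Type*} [Fintype ι]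
    [NonUnitalNonAssocSemiring R] {r : ι → R} (hr : ∀ l l', l ≠ l' → r l ≠ 0 → r l' = 0)
    (μ : ι → R) : ∑ k, μ k * r k = 0 ∨ ∃ l, ∑ k, μ k * r k = μ l * r l := by
  by_cases hsupp : ∃ l, r l ≠ 0
  · obtain ⟨l, hl⟩ := hsupp
    exact Or.inr ⟨l, Fintype.sum_eq_single l fun k hk => by rw [hr l k (Ne.symm hk) hl, mul_zero]⟩
  · push Not at hsupp
    exact Or.inl (by simp [hsupp])

theorem uplift_prop9_general {n m : ℕ} (X : Set (Fin n → ℝ)) (π : (Fin n → ℝ) → ℝ)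
    (πplus : ℝ) (hmax : IsGreatest (π '' X) πplus)
    (ρ : (Fin n → ℝ) → Fin m → ℝ) (hρ : ∀ x ∈ X, ∀ k, ρ x k ≤ 0)
    (hdisj : ∀ l l' : Fin m, l ≠ l' →
      ∀ x ∈ X, ρ x l ≠ 0 → ρ x l' = 0) :
    {μ : Fin m → ℝ | (∀ k, 0 ≤ μ k) ∧
        ∀ x ∈ X, π x - πplus ≤ ∑ k, μ k * ρ x k}
      = {μ : Fin m → ℝ | ∀ l,
          μ l ∈ {t : ℝ | 0 ≤ t ∧ ∀ x ∈ X, π x - πplus ≤ t * ρ x l}} := by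
  ext μ
  simp only [Set.mem_ofPred_eq]
  constructor
  · rintro ⟨hμ, hM⟩ l
    exact ⟨hμ l, fun x hx => (hM x hx).trans (sum_mul_le_mul_of_nonneg_of_nonpos hμ (hρ x hx) l)⟩
  · intro hbox
    refine ⟨fun k => (hbox k).1, fun x hx => ?_⟩
    rcases sum_mul_eq_zero_or_exists_eq_single (hdisj · · · x hx) μ with hzero | ⟨l, hsingle⟩
    · rw [hzero]
      exact sub_nonpos.2 (hmax.2 ⟨x, hx, rfl⟩)
    · rw [hsingle]
      exact (hbox l).2 x hx

/-- Proposition 9: with pairwise disjoint supports, M⁺ equals the box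
∏_l M⁺_l. -/
theorem uplift_prop9 {n m : ℕ} (X : Set (Fin n → ℝ)) (hX : X.Nonempty)
    (hXc : IsCompact X) (π : (Fin n → ℝ) → ℝ) (hπ : ContinuousOn π X)
    (πplus : ℝ) (hmax : IsGreatest (π '' X) πplus)
    (ρ : (Fin n → ℝ) → Fin m → ℝ) (hρ : ∀ x ∈ X, ∀ k, ρ x k ≤ 0)
    (hdisj : ∀ l l' : Fin m, l ≠ l' →
      ∀ x ∈ X, ρ x l ≠ 0 → ρ x l' = 0) :
    {μ : Fin m → ℝ | (∀ k, 0 ≤ μ k) ∧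
        ∀ x ∈ X, π x - πplus ≤ ∑ k, μ k * ρ x k}
      = {μ : Fin m → ℝ | ∀ l,
          μ l ∈ {t : ℝ | 0 ≤ t ∧ ∀ x ∈ X, π x - πplus ≤ t * ρ x l}} :=
  uplift_prop9_general X π πplus hmax ρ hρ hdisj
end

section
/- Necessary condition for zero uplift (Proposition 10): if ρ(x) ≤ 0 on X and min_{μ∈M⁺} U(μ) = 0, where U(μ) = π⁺ − π(x*) + μᵀρ(x*), then Σ_{l: M⁺_l bounded} μ_l^max · ρ^l(x*) ≤ π(x*) − π⁺, where μ_l^max is the maximum element of M⁺_l. -/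
/-!
A minimiser `μ₀` of the uplift satisfies `∑ₖ μ₀ₖ ρᵏ(x*) = π(x*) − π⁺`. Every term of
`μ₀ᵀρ(x)` is nonpositive, so each coordinate `μ₀ₗ` is a feasible single-constraint
multiplier and `μ₀ₗ ≤ μₗ^max` whenever `M⁺ₗ` is bounded. An unbounded `M⁺ₗ` forces
`ρˡ(x*) = 0`, since `ρˡ(x*) < 0` would bound `M⁺ₗ` by `(π(x*) − π⁺) / ρˡ(x*)`. Hence
`∑_{l bounded} μₗ^max ρˡ(x*) ≤ ∑_{l bounded} μ₀ₗ ρˡ(x*) = ∑ₖ μ₀ₖ ρᵏ(x*) = π(x*) − π⁺`.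
-/

open Finset

variable {α ι : Type*}

/-- With `f = π − π⁺` and `g = ρˡ` this is `M⁺ₗ`. -/
def scalarMultipliers (X : Set α) (f g : α → ℝ) : Set ℝ :=
  {t | 0 ≤ t ∧ ∀ x ∈ X, f x ≤ t * g x}

theorem bddAbove_scalarMultipliers_of_neg {X : Set α} {f g : α → ℝ} {x : α} (hx : x ∈ X)
    (hgx : g x < 0) : BddAbove (scalarMultipliers X f g) :=
  ⟨f x / g x, fun _ ht ↦ (le_div_iff_of_neg hgx).2 (ht.2 x hx)⟩

theorem eq_zero_of_not_bddAbove_scalarMultipliers {X : Set α} {f g : α → ℝ} {x : α}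
    (hx : x ∈ X) (hgx : g x ≤ 0) (hunb : ¬ BddAbove (scalarMultipliers X f g)) : g x = 0 :=
  hgx.eq_or_lt.resolve_right fun hlt ↦ hunb (bddAbove_scalarMultipliers_of_neg hx hlt)

theorem mem_scalarMultipliers_apply [Fintype ι] {X : Set α} {f : α → ℝ} {ρ : α → ι → ℝ}
    {μ : ι → ℝ} (hρ : ∀ x ∈ X, ∀ k, ρ x k ≤ 0) (hμ : ∀ k, 0 ≤ μ k)
    (hfeas : ∀ x ∈ X, f x ≤ ∑ k, μ k * ρ x k) (l : ι) :
    μ l ∈ scalarMultipliers X f (fun x ↦ ρ x l) := by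
  refine ⟨hμ l, fun x hx ↦ (hfeas x hx).trans ?_⟩
  have hterms (k : ι) : μ k * ρ x k ≤ 0 := mul_nonpos_of_nonneg_of_nonpos (hμ k) (hρ x hx k)
  simpa using sum_le_sum_of_subset_of_nonpos' (subset_univ {l}) fun k _ _ ↦ hterms k

theorem uplift_prop10_general {n m : ℕ} (X : Set (Fin n → ℝ))
    (π : (Fin n → ℝ) → ℝ)
    (πplus : ℝ)
    (xstar : Fin n → ℝ) (hxstar : xstar ∈ X)
    (ρ : (Fin n → ℝ) → Fin m → ℝ) (hρ : ∀ x ∈ X, ∀ k, ρ x k ≤ 0)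
    (B : Finset (Fin m)) (μmax : Fin m → ℝ)
    (hB : ∀ l ∈ B,
      IsGreatest {t : ℝ | 0 ≤ t ∧ ∀ x ∈ X, π x - πplus ≤ t * ρ x l} (μmax l))
    (hBc : ∀ l ∉ B,
      ¬ BddAbove {t : ℝ | 0 ≤ t ∧ ∀ x ∈ X, π x - πplus ≤ t * ρ x l})
    (hzero : IsLeast ((fun μ : Fin m → ℝ =>
        πplus - π xstar + ∑ k, μ k * ρ xstar k) ''
      {μ : Fin m → ℝ | (∀ k, 0 ≤ μ k) ∧
        ∀ x ∈ X, π x - πplus ≤ ∑ k, μ k * ρ x k}) 0) :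
    ∑ l ∈ B, μmax l * ρ xstar l ≤ π xstar - πplus := by
  obtain ⟨μ₀, ⟨hμ₀, hfeas⟩, hU⟩ := hzero.1
  have hle_max (l : Fin m) (hl : l ∈ B) : μ₀ l ≤ μmax l :=
    (hB l hl).2 (mem_scalarMultipliers_apply hρ hμ₀ hfeas l)
  have hzero_off (l : Fin m) (hl : l ∉ B) : ρ xstar l = 0 :=
    eq_zero_of_not_bddAbove_scalarMultipliers (g := fun x ↦ ρ x l) hxstar (hρ xstar hxstar l)
      (hBc l hl)
  calc ∑ l ∈ B, μmax l * ρ xstar l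
      ≤ ∑ l ∈ B, μ₀ l * ρ xstar l :=
        sum_le_sum fun l hl ↦ mul_le_mul_of_nonpos_right (hle_max l hl) (hρ xstar hxstar l)
    _ = ∑ k, μ₀ k * ρ xstar k :=
        sum_subset (subset_univ B) fun k _ hk ↦ by rw [hzero_off k hk, mul_zero]
    _ = π xstar - πplus := by linarith

/-- Proposition 10: necessary condition for zero uplift in terms of the
maximal single-constraint multipliers. -/
theorem uplift_prop10 {n m : ℕ} (X : Set (Fin n → ℝ)) (hX : X.Nonempty)
    (hXc : IsCompact X) (π : (Fin n → ℝ) → ℝ) (hπ : ContinuousOn π X)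
    (πplus : ℝ) (hmax : IsGreatest (π '' X) πplus)
    (xstar : Fin n → ℝ) (hxstar : xstar ∈ X)
    (ρ : (Fin n → ℝ) → Fin m → ℝ) (hρ : ∀ x ∈ X, ∀ k, ρ x k ≤ 0)
    (B : Finset (Fin m)) (μmax : Fin m → ℝ)
    (hB : ∀ l ∈ B,
      IsGreatest {t : ℝ | 0 ≤ t ∧ ∀ x ∈ X, π x - πplus ≤ t * ρ x l} (μmax l))
    (hBc : ∀ l ∉ B,
      ¬ BddAbove {t : ℝ | 0 ≤ t ∧ ∀ x ∈ X, π x - πplus ≤ t * ρ x l})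
    (hzero : IsLeast ((fun μ : Fin m → ℝ =>
        πplus - π xstar + ∑ k, μ k * ρ xstar k) ''
      {μ : Fin m → ℝ | (∀ k, 0 ≤ μ k) ∧
        ∀ x ∈ X, π x - πplus ≤ ∑ k, μ k * ρ x k}) 0) :
    ∑ l ∈ B, μmax l * ρ xstar l ≤ π xstar - πplus :=
  uplift_prop10_general X π πplus xstar hxstar ρ hρ B μmax hB hBc hzero
end
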